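/- Let κ_H > 0 and κ_G be real numbers with κ_G/κ_H ∈ (-2, 0). Then there exist constants c1 > 0 and c2 > 0 such that for all real numbers k1, k2, H0, one has (κ_H/2)(k1 + k2 - H0)² + κ_G k1 k2 + c1 H0² ≥ c2 (k1² + k2²). In fact one may take, for any ε > 0 with (1+ε)κ_G/κ_H ∈ (-2,0), c1 = κ_H/(2ε) and c2 = (κ_H - |κ_H + κ_G(1+ε)|)/(2(1+ε)). -/

import Mathlib

/-!
Write `S = k₁ + k₂`. Minimising over `H₀` gives `(S - H₀)² + H₀²/ε ≥ S²/(1 + ε)`, so the energy is at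
least `(κ_H (k₁² + k₂²) + 2 (κ_H + κ_G (1 + ε)) k₁ k₂) / (2 (1 + ε))`, and `2 |k₁ k₂| ≤ k₁² + k₂²`
bounds this below by `c₂ (k₁² + k₂²)`. The constant `c₂` is positive exactly when
`-2 κ_H < (1 + ε) κ_G < 0`, and since `-2 < κ_G / κ_H < 0` some `ε > 0` achieves this.
-/

lemma sq_div_one_add_le_sq_sub_add_sq_div {ε : ℝ} (hε : 0 < ε) (a b : ℝ) :
    a ^ 2 / (1 + ε) ≤ (a - b) ^ 2 + b ^ 2 / ε := by
  have hgap : (a - b) ^ 2 + b ^ 2 / ε - a ^ 2 / (1 + ε) =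
      (ε * a - (1 + ε) * b) ^ 2 / (ε * (1 + ε)) := by
    field_simp
    ring
  have : 0 ≤ (ε * a - (1 + ε) * b) ^ 2 / (ε * (1 + ε)) := by positivity
  linarith

lemma neg_abs_mul_sq_add_sq_le_two_mul (c x y : ℝ) :
    -(|c| * (x ^ 2 + y ^ 2)) ≤ 2 * c * (x * y) := by
  have hxy : |2 * (x * y)| ≤ x ^ 2 + y ^ 2 := by
    rw [abs_mul, abs_mul, abs_two, ← sq_abs x, ← sq_abs y, ← mul_assoc]
    exact two_mul_le_add_sq _ _
  have : |2 * c * (x * y)| ≤ |c| * (x ^ 2 + y ^ 2) := by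
    rw [mul_comm 2 c, mul_assoc, abs_mul]
    exact mul_le_mul_of_nonneg_left hxy (abs_nonneg c)
  linarith [neg_abs_le (2 * c * (x * y))]

lemma helfrich_energy_lower_bound {κH : ℝ} (hH : 0 ≤ κH) (κG : ℝ) {ε : ℝ} (hε : 0 < ε)
    (k1 k2 H0 : ℝ) :
    ((κH - |κH + κG * (1 + ε)|) / (2 * (1 + ε))) * (k1 ^ 2 + k2 ^ 2) ≤
      (κH / 2) * (k1 + k2 - H0) ^ 2 + κG * (k1 * k2) + (κH / (2 * ε)) * H0 ^ 2 := by
  have hε' : 0 < 1 + ε := by linarith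
  calc ((κH - |κH + κG * (1 + ε)|) / (2 * (1 + ε))) * (k1 ^ 2 + k2 ^ 2)
      = (κH * (k1 ^ 2 + k2 ^ 2) - |κH + κG * (1 + ε)| * (k1 ^ 2 + k2 ^ 2)) / (2 * (1 + ε)) := by
        ring
    _ ≤ (κH * (k1 ^ 2 + k2 ^ 2) + 2 * (κH + κG * (1 + ε)) * (k1 * k2)) / (2 * (1 + ε)) := by
        gcongr
        linarith [neg_abs_mul_sq_add_sq_le_two_mul (κH + κG * (1 + ε)) k1 k2]
    _ = (κH / 2) * ((k1 + k2) ^ 2 / (1 + ε)) + κG * (k1 * k2) := by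
        field_simp
        ring
    _ ≤ (κH / 2) * ((k1 + k2 - H0) ^ 2 + H0 ^ 2 / ε) + κG * (k1 * k2) := by
        gcongr
        exact sq_div_one_add_le_sq_sub_add_sq_div hε _ _
    _ = (κH / 2) * (k1 + k2 - H0) ^ 2 + κG * (k1 * k2) + (κH / (2 * ε)) * H0 ^ 2 := by
        ring

lemma exists_pos_abs_add_mul_one_add_lt {κH κG : ℝ} (hlow : -2 * κH < κG) (hneg : κG < 0) :
    ∃ ε : ℝ, 0 < ε ∧ |κH + κG * (1 + ε)| < κH := by
  -- this choice makes `κH + κG * (1 + ε) = κG / 2`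
  refine ⟨(2 * κH + κG) / (-2 * κG), div_pos (by linarith) (by linarith), ?_⟩
  have hmid : κH + κG * (1 + (2 * κH + κG) / (-2 * κG)) = κG / 2 := by
    field_simp [hneg.ne]
    ring
  rw [hmid, abs_of_neg (by linarith)]
  linarith

theorem stmt_3 (κH κG : ℝ) (hH : 0 < κH) (hG : κG / κH ∈ Set.Ioo (-2 : ℝ) 0) :
    (∃ c1 c2 : ℝ, 0 < c1 ∧ 0 < c2 ∧
      ∀ k1 k2 H0 : ℝ,
        (κH / 2) * (k1 + k2 - H0) ^ 2 + κG * (k1 * k2) + c1 * H0 ^ 2 ≥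
          c2 * (k1 ^ 2 + k2 ^ 2)) ∧
    (∀ ε : ℝ, 0 < ε → (1 + ε) * κG / κH ∈ Set.Ioo (-2 : ℝ) 0 →
      ∀ k1 k2 H0 : ℝ,
        (κH / 2) * (k1 + k2 - H0) ^ 2 + κG * (k1 * k2) + (κH / (2 * ε)) * H0 ^ 2 ≥
          ((κH - |κH + κG * (1 + ε)|) / (2 * (1 + ε))) * (k1 ^ 2 + k2 ^ 2)) := by
  obtain ⟨hlow, hneg⟩ := hG
  rw [lt_div_iff₀ hH] at hlow
  rw [div_lt_iff₀ hH, zero_mul] at hneg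
  obtain ⟨ε, hε, habs⟩ := exists_pos_abs_add_mul_one_add_lt hlow hneg
  refine ⟨⟨κH / (2 * ε), (κH - |κH + κG * (1 + ε)|) / (2 * (1 + ε)), by positivity,
    div_pos (sub_pos.mpr habs) (by positivity),
    helfrich_energy_lower_bound hH.le κG hε⟩, ?_⟩
  intro ε' hε' _
  exact helfrich_energy_lower_bound hH.le κG hε'
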